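/- arXiv:2605.13227 — 10 statements merged into one kernel-verified Lean document; each statement's English description precedes it below -/
import Mathlib

section
/- Let (V,g) be a Euclidean vector space of even dimension 2m with a compatible complex structure J (i.e. J is orthogonal and J² = -Id). If τ ∈ Λ³V is a 3-form such that for every X ∈ V the endomorphism τ_X (defined by g(τ_X Y, Z) = τ(X,Y,Z)) commutes with J (i.e. τ_X ∈ u(m)), then τ = 0. -/
open scoped InnerProductSpace

/-- In a Hermitian vector space `(V, g, J)` of dimension `2m`, a 3-form `τ`
all of whose associated endomorphisms `τ_X` lie in `u(m)` (i.e. commute with `J`,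
equivalently `τ(X, JY, JZ) = τ(X, Y, Z)`) vanishes. -/
theorem stmt_0 {V : Type*} [NormedAddCommGroup V] [InnerProductSpace ℝ V]
    [FiniteDimensional ℝ V] (m : ℕ) (hdim : Module.finrank ℝ V = 2 * m)
    (J : V →ₗ[ℝ] V) (hJ2 : ∀ x, J (J x) = -x)
    (hJorth : ∀ x y, ⟪J x, J y⟫_ℝ = ⟪x, y⟫_ℝ)
    (τ : V →ₗ[ℝ] V →ₗ[ℝ] V →ₗ[ℝ] ℝ)
    (halt1 : ∀ x y z, τ x y z = - τ y x z)
    (halt2 : ∀ x y z, τ x y z = - τ x z y)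
    (hu : ∀ x y z, τ x (J y) (J z) = τ x y z) :
    τ = 0 := by
  have h13 : ∀ a b c, τ (J a) b (J c) = τ a b c := fun a b c => by
    rw [halt1, hu, ← halt1]
  have h12 : ∀ a b c, τ (J a) (J b) c = τ a b c := fun a b c => by
    rw [halt2, h13, ← halt2]
  ext x y z
  have h := hu (J x) (J y) z
  rw [hJ2, map_neg, LinearMap.neg_apply, h13, h12] at h
  simp only [LinearMap.zero_apply]
  linarith
end

section
/- Let (V,g) be a Euclidean vector space of dimension 4q with q ≥ 2, equipped with a quaternionic Hermitian structure (J₁,J₂,J₃) (orthogonal complex structures satisfying the quaternion relations). If τ ∈ Λ³V is a 3-form such that for every X ∈ V the endomorphism τ_X lies in sp(q) ⊕ sp(1) ⊂ so(V), then τ = 0. -/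
open scoped InnerProductSpace

private lemma skew_of {V : Type*} [NormedAddCommGroup V] [InnerProductSpace ℝ V]
    (J : V →ₗ[ℝ] V) (hsq : ∀ x, J (J x) = -x)
    (ho : ∀ x y, ⟪J x, J y⟫_ℝ = ⟪x, y⟫_ℝ) (x y : V) :
    ⟪J x, y⟫_ℝ = -⟪x, J y⟫_ℝ := by
  have h := ho x (J y)
  rw [hsq, inner_neg_right] at h
  linarith

private lemma aux1 {V : Type*} [NormedAddCommGroup V] [InnerProductSpace ℝ V]
    (τ : V →ₗ[ℝ] V →ₗ[ℝ] V →ₗ[ℝ] ℝ)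
    (halt1 : ∀ x y z, τ x y z = - τ y x z)
    (halt2 : ∀ x y z, τ x y z = - τ x z y)
    (Ji Jj Jk : V →ₗ[ℝ] V) (s : V →ₗ[ℝ] V →ₗ[ℝ] ℝ) (ai aj ak : ℝ) (Y W : V)
    (hkk : Jk (Jk Y) = -Y)
    (hk : ∀ A B, s (Jk A) (Jk B) = s A B)
    (heq : ∀ A B, τ Y A B = s A B + ai * ⟪Ji A, B⟫_ℝ + aj * ⟪Jj A, B⟫_ℝ + ak * ⟪Jk A, B⟫_ℝ)
    (z1 : ⟪Ji (Jk Y), W⟫_ℝ = 0) (z2 : ⟪Jj (Jk Y), W⟫_ℝ = 0)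
    (z4 : ⟪Ji Y, Jk W⟫_ℝ = 0) (z5 : ⟪Jj Y, Jk W⟫_ℝ = 0) (z6 : ⟪Jk Y, Jk W⟫_ℝ = 0)
    (z0 : ⟪Y, W⟫_ℝ = 0) :
    τ W Y (Jk Y) = 0 := by
  have hcyc : τ W Y (Jk Y) = τ Y (Jk Y) W := by
    rw [halt1 W Y (Jk Y), halt2 Y W (Jk Y)]; ring
  have e1 : τ Y (Jk Y) W = s (Jk Y) W := by
    rw [heq (Jk Y) W, z1, z2, hkk, inner_neg_left, z0]; ring
  have e2 : τ Y Y (Jk W) = 0 := by have h := halt1 Y Y (Jk W); linarith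
  have e3 : s Y (Jk W) = 0 := by
    have h := heq Y (Jk W)
    rw [e2, z4, z5, z6] at h
    linarith
  have e4 : s (Jk Y) W = 0 := by
    have h := hk (Jk Y) W
    rw [hkk, map_neg, LinearMap.neg_apply] at h
    rw [e3] at h
    linarith
  rw [hcyc, e1, e4]

/-- In a quaternionic Hermitian vector space `(V, g, J₁, J₂, J₃)` of dimension
`4q`, `q ≥ 2`, a 3-form `τ` all of whose associated endomorphisms `τ_X` lie in
`sp(q) ⊕ sp(1)` (i.e. `τ_X = σ_X + a₁ J₁ + a₂ J₂ + a₃ J₃` with `σ_X ∈ sp(q)`) vanishes. -/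
theorem stmt_1 {V : Type*} [NormedAddCommGroup V] [InnerProductSpace ℝ V]
    [FiniteDimensional ℝ V] (q : ℕ) (hq : 2 ≤ q)
    (hdim : Module.finrank ℝ V = 4 * q)
    (J1 J2 J3 : V →ₗ[ℝ] V)
    (hJ1sq : ∀ x, J1 (J1 x) = -x) (hJ2sq : ∀ x, J2 (J2 x) = -x)
    (hJ3sq : ∀ x, J3 (J3 x) = -x)
    (hJ1o : ∀ x y, ⟪J1 x, J1 y⟫_ℝ = ⟪x, y⟫_ℝ)
    (hJ2o : ∀ x y, ⟪J2 x, J2 y⟫_ℝ = ⟪x, y⟫_ℝ)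
    (hJ3o : ∀ x y, ⟪J3 x, J3 y⟫_ℝ = ⟪x, y⟫_ℝ)
    (hq12 : ∀ x, J1 (J2 x) = J3 x)
    (hq23 : ∀ x, J2 (J3 x) = J1 x)
    (hq31 : ∀ x, J3 (J1 x) = J2 x)
    (τ : V →ₗ[ℝ] V →ₗ[ℝ] V →ₗ[ℝ] ℝ)
    (halt1 : ∀ x y z, τ x y z = - τ y x z)
    (halt2 : ∀ x y z, τ x y z = - τ x z y)
    (hsp : ∀ X : V, ∃ (s : V →ₗ[ℝ] V →ₗ[ℝ] ℝ) (a1 a2 a3 : ℝ),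
      (∀ Y Z, s Y Z = - s Z Y) ∧
      (∀ Y Z, s (J1 Y) (J1 Z) = s Y Z) ∧
      (∀ Y Z, s (J2 Y) (J2 Z) = s Y Z) ∧
      (∀ Y Z, s (J3 Y) (J3 Z) = s Y Z) ∧
      (∀ Y Z, τ X Y Z =
        s Y Z + a1 * ⟪J1 Y, Z⟫_ℝ + a2 * ⟪J2 Y, Z⟫_ℝ + a3 * ⟪J3 Y, Z⟫_ℝ)) :
    τ = 0 := by
  -- extra quaternion identities
  have hq21 : ∀ x : V, J2 (J1 x) = -(J3 x) := by
    intro x; rw [← hq23 x, hJ2sq]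
  have hq32 : ∀ x : V, J3 (J2 x) = -(J1 x) := by
    intro x; rw [← hq31 x, hJ3sq]
  have hq13 : ∀ x : V, J1 (J3 x) = -(J2 x) := by
    intro x; rw [← hq12 x, hJ1sq]
  -- skew-adjointness
  have sk1 := skew_of J1 hJ1sq hJ1o
  have sk2 := skew_of J2 hJ2sq hJ2o
  have sk3 := skew_of J3 hJ3sq hJ3o
  -- existence of a vector orthogonal to the quaternionic span of W
  have hY : ∀ W : V, ∃ Y : V, Y ≠ 0 ∧ ⟪Y, W⟫_ℝ = 0 ∧ ⟪Y, J1 W⟫_ℝ = 0 ∧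
      ⟪Y, J2 W⟫_ℝ = 0 ∧ ⟪Y, J3 W⟫_ℝ = 0 := by
    intro W
    classical
    set b : Fin 4 → V := ![W, J1 W, J2 W, J3 W] with hb
    set K : Submodule ℝ V := Submodule.span ℝ (Set.range b) with hK
    have hfin : Module.finrank ℝ K ≤ 4 := by
      have := finrank_range_le_card (R := ℝ) b
      simpa [Set.finrank, hK] using this
    have hne : Kᗮ ≠ ⊥ := by
      intro hbot
      have hsum := Submodule.finrank_add_finrank_orthogonal K
      rw [hbot, finrank_bot, hdim] at hsum
      omega
    obtain ⟨y, hymem, hyne⟩ := (Submodule.ne_bot_iff _).mp hne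
    have ho := (Submodule.mem_orthogonal K y).mp hymem
    have hmem : ∀ i : Fin 4, b i ∈ K := fun i =>
      Submodule.subset_span (Set.mem_range_self i)
    refine ⟨y, hyne, ?_, ?_, ?_, ?_⟩
    · rw [real_inner_comm]; exact ho _ (hmem 0)
    · rw [real_inner_comm]; exact ho _ (hmem 1)
    · rw [real_inner_comm]; exact ho _ (hmem 2)
    · rw [real_inner_comm]; exact ho _ (hmem 3)
  -- main invariance statement
  have hainv : ∀ W U V' : V, (τ W (J1 U) (J1 V') = τ W U V') ∧
      (τ W (J2 U) (J2 V') = τ W U V') ∧ (τ W (J3 U) (J3 V') = τ W U V') := by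
    intro W
    obtain ⟨Y, hYne, o0, o1, o2, o3⟩ := hY W
    have hYY : ⟪Y, Y⟫_ℝ ≠ 0 := fun h => hYne (inner_self_eq_zero.mp h)
    -- master inner product facts
    have m10 : ⟪J1 Y, W⟫_ℝ = 0 := by rw [sk1 Y W, o1, neg_zero]
    have m20 : ⟪J2 Y, W⟫_ℝ = 0 := by rw [sk2 Y W, o2, neg_zero]
    have m30 : ⟪J3 Y, W⟫_ℝ = 0 := by rw [sk3 Y W, o3, neg_zero]
    have m11 : ⟪J1 Y, J1 W⟫_ℝ = 0 := by rw [hJ1o]; exact o0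
    have m22 : ⟪J2 Y, J2 W⟫_ℝ = 0 := by rw [hJ2o]; exact o0
    have m33 : ⟪J3 Y, J3 W⟫_ℝ = 0 := by rw [hJ3o]; exact o0
    have m12 : ⟪J1 Y, J2 W⟫_ℝ = 0 := by rw [sk1 Y (J2 W), hq12 W, o3, neg_zero]
    have m13 : ⟪J1 Y, J3 W⟫_ℝ = 0 := by
      rw [sk1 Y (J3 W), hq13 W, inner_neg_right, o2]; ring
    have m21 : ⟪J2 Y, J1 W⟫_ℝ = 0 := by
      rw [sk2 Y (J1 W), hq21 W, inner_neg_right, o3]; ring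
    have m23 : ⟪J2 Y, J3 W⟫_ℝ = 0 := by rw [sk2 Y (J3 W), hq23 W, o1, neg_zero]
    have m31 : ⟪J3 Y, J1 W⟫_ℝ = 0 := by rw [sk3 Y (J1 W), hq31 W, o2, neg_zero]
    have m32 : ⟪J3 Y, J2 W⟫_ℝ = 0 := by
      rw [sk3 Y (J2 W), hq32 W, inner_neg_right, o1]; ring
    -- self inner product facts
    have p1 : ⟪Y, J1 Y⟫_ℝ = 0 := by
      have h := sk1 Y Y; have h2 := real_inner_comm Y (J1 Y); linarith
    have p2 : ⟪Y, J2 Y⟫_ℝ = 0 := by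
      have h := sk2 Y Y; have h2 := real_inner_comm Y (J2 Y); linarith
    have p3 : ⟪Y, J3 Y⟫_ℝ = 0 := by
      have h := sk3 Y Y; have h2 := real_inner_comm Y (J3 Y); linarith
    have q12 : ⟪J1 Y, J2 Y⟫_ℝ = 0 := by rw [sk1 Y (J2 Y), hq12 Y, p3, neg_zero]
    have q13 : ⟪J1 Y, J3 Y⟫_ℝ = 0 := by
      rw [sk1 Y (J3 Y), hq13 Y, inner_neg_right, p2]; ring
    have q21 : ⟪J2 Y, J1 Y⟫_ℝ = 0 := by
      rw [sk2 Y (J1 Y), hq21 Y, inner_neg_right, p3]; ring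
    have q23 : ⟪J2 Y, J3 Y⟫_ℝ = 0 := by rw [sk2 Y (J3 Y), hq23 Y, p1, neg_zero]
    have q31 : ⟪J3 Y, J1 Y⟫_ℝ = 0 := by rw [sk3 Y (J1 Y), hq31 Y, p2, neg_zero]
    have q32 : ⟪J3 Y, J2 Y⟫_ℝ = 0 := by
      rw [sk3 Y (J2 Y), hq32 Y, inner_neg_right, p1]; ring
    -- the six vanishing values of τ via aux1
    obtain ⟨sY, b1, b2, b3, hssY, hsY1, hsY2, hsY3, heqY⟩ := hsp Y
    have t1 : τ W Y (J1 Y) = 0 := by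
      refine aux1 τ halt1 halt2 J2 J3 J1 sY b2 b3 b1 Y W (hJ1sq Y) hsY1
        (fun A B => by rw [heqY A B]; ring) ?_ ?_ ?_ ?_ ?_ o0
      · rw [hq21 Y, inner_neg_left, m30]; ring
      · rw [hq31 Y]; exact m20
      · exact m21
      · exact m31
      · exact m11
    have t2 : τ W Y (J2 Y) = 0 := by
      refine aux1 τ halt1 halt2 J3 J1 J2 sY b3 b1 b2 Y W (hJ2sq Y) hsY2
        (fun A B => by rw [heqY A B]; ring) ?_ ?_ ?_ ?_ ?_ o0
      · rw [hq32 Y, inner_neg_left, m10]; ring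
      · rw [hq12 Y]; exact m30
      · exact m32
      · exact m12
      · exact m22
    have t3 : τ W Y (J3 Y) = 0 := by
      refine aux1 τ halt1 halt2 J1 J2 J3 sY b1 b2 b3 Y W (hJ3sq Y) hsY3
        (fun A B => heqY A B) ?_ ?_ ?_ ?_ ?_ o0
      · rw [hq13 Y, inner_neg_left, m20]; ring
      · rw [hq23 Y]; exact m10
      · exact m13
      · exact m23
      · exact m33
    -- and at rotated base points
    obtain ⟨sA, c1, c2, c3, hssA, hsA1, hsA2, hsA3, heqA⟩ := hsp (J2 Y)
    have t1' : τ W (J2 Y) (J3 Y) = 0 := by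
      have h : τ W (J2 Y) (J1 (J2 Y)) = 0 := by
        refine aux1 τ halt1 halt2 J2 J3 J1 sA c2 c3 c1 (J2 Y) W (hJ1sq (J2 Y)) hsA1
          (fun A B => by rw [heqA A B]; ring) ?_ ?_ ?_ ?_ ?_ m20
        · rw [hq12 Y, hq23 Y]; exact m10
        · rw [hq12 Y, hJ3sq Y, inner_neg_left, o0]; ring
        · rw [hJ2sq Y, inner_neg_left, o1]; ring
        · rw [hq32 Y, inner_neg_left, m11]; ring
        · rw [hq12 Y]; exact m31
      rw [hq12 Y] at h
      exact h
    obtain ⟨sB, d1, d2, d3, hssB, hsB1, hsB2, hsB3, heqB⟩ := hsp (J3 Y)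
    have t2' : τ W (J3 Y) (J1 Y) = 0 := by
      have h : τ W (J3 Y) (J2 (J3 Y)) = 0 := by
        refine aux1 τ halt1 halt2 J3 J1 J2 sB d3 d1 d2 (J3 Y) W (hJ2sq (J3 Y)) hsB2
          (fun A B => by rw [heqB A B]; ring) ?_ ?_ ?_ ?_ ?_ m30
        · rw [hq23 Y, hq31 Y]; exact m20
        · rw [hq23 Y, hJ1sq Y, inner_neg_left, o0]; ring
        · rw [hJ3sq Y, inner_neg_left, o2]; ring
        · rw [hq13 Y, inner_neg_left, m22]; ring
        · rw [hq23 Y]; exact m12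
      rw [hq23 Y] at h
      exact h
    obtain ⟨sC, e1c, e2c, e3c, hssC, hsC1, hsC2, hsC3, heqC⟩ := hsp (J1 Y)
    have t3' : τ W (J1 Y) (J2 Y) = 0 := by
      have h : τ W (J1 Y) (J3 (J1 Y)) = 0 := by
        refine aux1 τ halt1 halt2 J1 J2 J3 sC e1c e2c e3c (J1 Y) W (hJ3sq (J1 Y)) hsC3
          (fun A B => heqC A B) ?_ ?_ ?_ ?_ ?_ m10
        · rw [hq31 Y, hq12 Y]; exact m30
        · rw [hq31 Y, hJ2sq Y, inner_neg_left, o0]; ring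
        · rw [hJ1sq Y, inner_neg_left, o3]; ring
        · rw [hq21 Y, inner_neg_left, m33]; ring
        · rw [hq31 Y]; exact m23
      rw [hq31 Y] at h
      exact h
    -- decomposition at W, coefficients vanish
    obtain ⟨s, a1, a2, a3, hss, hs1, hs2, hs3, heq⟩ := hsp W
    have eA1 : τ W Y (J1 Y) = s Y (J1 Y) + a1 * ⟪Y, Y⟫_ℝ := by
      rw [heq Y (J1 Y), hJ1o Y Y, q21, q31]; ring
    have eB1 : τ W (J2 Y) (J3 Y) = s (J2 Y) (J3 Y) + a1 * ⟪Y, Y⟫_ℝ := by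
      rw [heq (J2 Y) (J3 Y), hq12 Y, hJ3o Y Y, hJ2sq Y, hq32 Y,
        inner_neg_left, inner_neg_left, p3, q13]; ring
    have sAB1 : s (J2 Y) (J3 Y) = - s Y (J1 Y) := by
      have h := hs2 Y (J1 Y)
      rw [hq21 Y, map_neg] at h
      linarith
    have ha1 : a1 = 0 := by
      have h1 : s Y (J1 Y) + a1 * ⟪Y, Y⟫_ℝ = 0 := by rw [← eA1]; exact t1
      have h2 : s (J2 Y) (J3 Y) + a1 * ⟪Y, Y⟫_ℝ = 0 := by rw [← eB1]; exact t1'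
      rw [sAB1] at h2
      have : a1 * ⟪Y, Y⟫_ℝ = 0 := by linarith
      exact (mul_eq_zero.mp this).resolve_right hYY
    have eA2 : τ W Y (J2 Y) = s Y (J2 Y) + a2 * ⟪Y, Y⟫_ℝ := by
      rw [heq Y (J2 Y), hJ2o Y Y, q12, q32]; ring
    have eB2 : τ W (J3 Y) (J1 Y) = s (J3 Y) (J1 Y) + a2 * ⟪Y, Y⟫_ℝ := by
      rw [heq (J3 Y) (J1 Y), hq23 Y, hJ1o Y Y, hJ3sq Y, hq13 Y,
        inner_neg_left, inner_neg_left, p1, q21]; ring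
    have sAB2 : s (J3 Y) (J1 Y) = - s Y (J2 Y) := by
      have h := hs3 Y (J2 Y)
      rw [hq32 Y, map_neg] at h
      linarith
    have ha2 : a2 = 0 := by
      have h1 : s Y (J2 Y) + a2 * ⟪Y, Y⟫_ℝ = 0 := by rw [← eA2]; exact t2
      have h2 : s (J3 Y) (J1 Y) + a2 * ⟪Y, Y⟫_ℝ = 0 := by rw [← eB2]; exact t2'
      rw [sAB2] at h2
      have : a2 * ⟪Y, Y⟫_ℝ = 0 := by linarith
      exact (mul_eq_zero.mp this).resolve_right hYY
    have eA3 : τ W Y (J3 Y) = s Y (J3 Y) + a3 * ⟪Y, Y⟫_ℝ := by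
      rw [heq Y (J3 Y), hJ3o Y Y, q13, q23]; ring
    have eB3 : τ W (J1 Y) (J2 Y) = s (J1 Y) (J2 Y) + a3 * ⟪Y, Y⟫_ℝ := by
      rw [heq (J1 Y) (J2 Y), hq31 Y, hJ2o Y Y, hJ1sq Y, hq21 Y,
        inner_neg_left, inner_neg_left, p2, q32]; ring
    have sAB3 : s (J1 Y) (J2 Y) = - s Y (J3 Y) := by
      have h := hs1 Y (J3 Y)
      rw [hq13 Y, map_neg] at h
      linarith
    have ha3 : a3 = 0 := by
      have h1 : s Y (J3 Y) + a3 * ⟪Y, Y⟫_ℝ = 0 := by rw [← eA3]; exact t3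
      have h2 : s (J1 Y) (J2 Y) + a3 * ⟪Y, Y⟫_ℝ = 0 := by rw [← eB3]; exact t3'
      rw [sAB3] at h2
      have : a3 * ⟪Y, Y⟫_ℝ = 0 := by linarith
      exact (mul_eq_zero.mp this).resolve_right hYY
    have hWt : ∀ A B, τ W A B = s A B := by
      intro A B; rw [heq A B, ha1, ha2, ha3]; ring
    intro U V'
    refine ⟨?_, ?_, ?_⟩
    · rw [hWt, hWt, hs1]
    · rw [hWt, hWt, hs2]
    · rw [hWt, hWt, hs3]
  -- swap lemma
  have hswap : ∀ J : V →ₗ[ℝ] V, (∀ x, J (J x) = -x) →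
      (∀ W U V', τ W (J U) (J V') = τ W U V') →
      ∀ A B C, τ (J A) (J B) C = -τ A B C := by
    intro J hsq hi A B C
    have h1 : τ (J B) (J A) (J (J C)) = τ (J B) A (J C) := hi (J B) A (J C)
    rw [hsq C, map_neg] at h1
    have h2 : τ (J B) A (J C) = - τ A (J B) (J C) := by rw [← halt1]
    have h3 : τ A (J B) (J C) = τ A B C := hi A B C
    have h4 : τ (J A) (J B) C = - τ (J B) (J A) C := halt1 (J A) (J B) C
    rw [h4]
    rw [h2, h3] at h1
    linarith
  have hi1 : ∀ W U V', τ W (J1 U) (J1 V') = τ W U V' := fun W U V' => (hainv W U V').1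
  have hi2 : ∀ W U V', τ W (J2 U) (J2 V') = τ W U V' := fun W U V' => (hainv W U V').2.1
  have hi3 : ∀ W U V', τ W (J3 U) (J3 V') = τ W U V' := fun W U V' => (hainv W U V').2.2
  have hsw1 := hswap J1 hJ1sq hi1
  have hsw2 := hswap J2 hJ2sq hi2
  have hsw3 := hswap J3 hJ3sq hi3
  apply LinearMap.ext; intro X
  apply LinearMap.ext; intro Y0
  apply LinearMap.ext; intro Z
  simp only [LinearMap.zero_apply]
  have e1 : τ (J1 X) (J1 Y0) Z = -τ X Y0 Z := hsw1 X Y0 Z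
  have e2 : τ (J2 (J1 X)) (J2 (J1 Y0)) Z = -τ (J1 X) (J1 Y0) Z := hsw2 (J1 X) (J1 Y0) Z
  rw [hq21 X, hq21 Y0] at e2
  simp only [map_neg, LinearMap.neg_apply, neg_neg] at e2
  have e3 : τ (J3 X) (J3 Y0) Z = -τ X Y0 Z := hsw3 X Y0 Z
  linarith
end

section
/- Let (V,g) be a Euclidean vector space and τ ∈ Λ³V. With τ² defined by τ²_{X,Y}Z = τ_Z(τ_X Y) and b the Bianchi sum, one has for every X ∈ V: X ⌟ b(τ²) = (τ_X)_* τ, where (τ_X)_* denotes the natural Lie-algebra action of the skew endomorphism τ_X on the 3-form τ. -/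
open scoped InnerProductSpace

/-- For a 3-form `τ` on a Euclidean vector space, encoded via the bilinear map
`B` with `⟪B X Y, Z⟫ = τ(X,Y,Z)`, one has `X ⌟ b(τ²) = (τ_X)_* τ`, i.e. for all `X,Y,Z,W`:
`b(τ²)(X,Y,Z,W) = -(τ(τ_X Y, Z, W) + τ(Y, τ_X Z, W) + τ(Y, Z, τ_X W))`. -/
theorem stmt_3 {V : Type*} [NormedAddCommGroup V] [InnerProductSpace ℝ V]
    [FiniteDimensional ℝ V]
    (B : V →ₗ[ℝ] V →ₗ[ℝ] V)
    (halt1 : ∀ x y z, ⟪B x y, z⟫_ℝ = -⟪B y x, z⟫_ℝ)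
    (halt2 : ∀ x y z, ⟪B x y, z⟫_ℝ = -⟪B x z, y⟫_ℝ) :
    ∀ X Y Z W : V,
      ⟪B Z (B X Y), W⟫_ℝ + ⟪B X (B Y Z), W⟫_ℝ + ⟪B Y (B Z X), W⟫_ℝ
        = -(⟪B (B X Y) Z, W⟫_ℝ + ⟪B Y (B X Z), W⟫_ℝ + ⟪B Y Z, B X W⟫_ℝ) := by
  have hBA : ∀ a b : V, B a b = -B b a := fun a b =>
    ext_inner_right ℝ (fun z => by rw [halt1 a b z, inner_neg_left])
  intro X Y Z W
  have h1 : ⟪B Z (B X Y), W⟫_ℝ = -⟪B (B X Y) Z, W⟫_ℝ := by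
    rw [hBA Z (B X Y), inner_neg_left]
  have h2 : ⟪B Y (B Z X), W⟫_ℝ = -⟪B Y (B X Z), W⟫_ℝ := by
    rw [hBA Z X, map_neg, inner_neg_left]
  have h3 : ⟪B X (B Y Z), W⟫_ℝ = -⟪B Y Z, B X W⟫_ℝ := by
    rw [halt2 X (B Y Z) W, real_inner_comm]
  linarith
end

section
/- Let (V,g) be a Euclidean vector space and τ ∈ Λ³V with b(τ²) = 0. Then for every X ∈ V, the endomorphism τ_X annihilates τ under the natural action, i.e. (τ_X)_* τ = 0; consequently the Lie algebra g_τ ⊂ so(V) generated by {τ_X : X ∈ V} is contained in the stabilizer algebra stab(τ) = {α ∈ so(V) : α_* τ = 0}. -/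
/-!
Write `τ(x, y, z) = ⟪B x y, z⟫`. Since `τ` is a 3-form, each `τ_X = B X` is skew-adjoint and
`B X Z = -B Z X`; moving `τ_X` across the inner product turns the three terms of `(τ_X)_* τ`
into minus the three terms of the Bianchi sum `b(τ²)`, so `(τ_X)_* τ = 0`. The stabilizer of any
trilinear form under the derivation action is a Lie subalgebra, hence it contains the Lie
algebra generated by the `τ_X`.
-/

open scoped InnerProductSpace

attribute [local instance 100] LieRing.ofAssociativeRing

section Stabilizer

variable {R M : Type*} [CommRing R] [AddCommGroup M] [Module R M]

def trilinearFormStabilizer (τ : M →ₗ[R] M →ₗ[R] M →ₗ[R] R) :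
    LieSubalgebra R (Module.End R M) where
  carrier := {A | ∀ x y z, τ (A x) y z + τ x (A y) z + τ x y (A z) = 0}
  zero_mem' := by simp
  add_mem' := by
    intro a b ha hb x y z
    simp only [LinearMap.add_apply, map_add]
    linear_combination ha x y z + hb x y z
  smul_mem' := by
    intro c a ha x y z
    simp only [LinearMap.smul_apply, map_smul, smul_eq_mul]
    linear_combination c * ha x y z
  lie_mem' := by
    intro a b ha hb x y z
    simp only [Ring.lie_def, LinearMap.sub_apply, Module.End.mul_apply, map_sub]
    linear_combination ha (b x) y z + ha x (b y) z + ha x y (b z)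
      - hb (a x) y z - hb x (a y) z - hb x y (a z)

theorem mem_trilinearFormStabilizer {τ : M →ₗ[R] M →ₗ[R] M →ₗ[R] R} {A : Module.End R M} :
    A ∈ trilinearFormStabilizer τ ↔ ∀ x y z, τ (A x) y z + τ x (A y) z + τ x y (A z) = 0 :=
  Iff.rfl

end Stabilizer

section ThreeForm

variable {V : Type*} [NormedAddCommGroup V] [InnerProductSpace ℝ V] {B : V →ₗ[ℝ] V →ₗ[ℝ] V}

theorem inner_apply_eq_neg_inner_apply (halt2 : ∀ x y z, ⟪B x y, z⟫_ℝ = -⟪B x z, y⟫_ℝ)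
    (x y z : V) : ⟪B x y, z⟫_ℝ = -⟪y, B x z⟫_ℝ := by
  rw [halt2, real_inner_comm]

theorem apply_swap_eq_neg (halt1 : ∀ x y z, ⟪B x y, z⟫_ℝ = -⟪B y x, z⟫_ℝ) (x y : V) :
    B x y = -B y x :=
  ext_inner_right ℝ fun z => by rw [inner_neg_left, halt1]

theorem inner_derivation_eq_zero_of_bianchi
    (halt1 : ∀ x y z, ⟪B x y, z⟫_ℝ = -⟪B y x, z⟫_ℝ)
    (halt2 : ∀ x y z, ⟪B x y, z⟫_ℝ = -⟪B x z, y⟫_ℝ)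
    (hbianchi : ∀ X Y Z W : V,
      ⟪B Z (B X Y), W⟫_ℝ + ⟪B X (B Y Z), W⟫_ℝ + ⟪B Y (B Z X), W⟫_ℝ = 0)
    (X Y Z W : V) :
    ⟪B (B X Y) Z, W⟫_ℝ + ⟪B Y (B X Z), W⟫_ℝ + ⟪B Y Z, B X W⟫_ℝ = 0 := by
  have h₁ : ⟪B (B X Y) Z, W⟫_ℝ = -⟪B Z (B X Y), W⟫_ℝ := halt1 _ _ _
  have h₂ : ⟪B Y (B X Z), W⟫_ℝ = -⟪B Y (B Z X), W⟫_ℝ := by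
    rw [apply_swap_eq_neg halt1 X Z, map_neg, inner_neg_left]
  have h₃ := inner_apply_eq_neg_inner_apply halt2 X (B Y Z) W
  linarith [hbianchi X Y Z W]

end ThreeForm

theorem stmt_4_general {V : Type*} [NormedAddCommGroup V] [InnerProductSpace ℝ V]
    (B : V →ₗ[ℝ] V →ₗ[ℝ] V)
    (halt1 : ∀ x y z, ⟪B x y, z⟫_ℝ = -⟪B y x, z⟫_ℝ)
    (halt2 : ∀ x y z, ⟪B x y, z⟫_ℝ = -⟪B x z, y⟫_ℝ)
    (hbianchi : ∀ X Y Z W : V,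
      ⟪B Z (B X Y), W⟫_ℝ + ⟪B X (B Y Z), W⟫_ℝ + ⟪B Y (B Z X), W⟫_ℝ = 0) :
    (∀ X Y Z W : V,
        ⟪B (B X Y) Z, W⟫_ℝ + ⟪B Y (B X Z), W⟫_ℝ + ⟪B Y Z, B X W⟫_ℝ = 0)
    ∧ (∀ A : Module.End ℝ V,
        A ∈ LieSubalgebra.lieSpan ℝ (Module.End ℝ V)
          (Set.range fun X : V => (B X : Module.End ℝ V)) →
        ∀ Y Z W : V,
          ⟪B (A Y) Z, W⟫_ℝ + ⟪B Y (A Z), W⟫_ℝ + ⟪B Y Z, A W⟫_ℝ = 0) := by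
  have hstab := inner_derivation_eq_zero_of_bianchi halt1 halt2 hbianchi
  have hle : LieSubalgebra.lieSpan ℝ (Module.End ℝ V)
      (Set.range fun X : V => (B X : Module.End ℝ V)) ≤
        trilinearFormStabilizer (B.compr₂ (innerₗ V)) := by
    rw [LieSubalgebra.lieSpan_le]
    rintro _ ⟨X, rfl⟩
    exact mem_trilinearFormStabilizer.mpr (by simpa using hstab X)
  exact ⟨hstab, fun A hA => by simpa using mem_trilinearFormStabilizer.mp (hle hA)⟩

/-- For a 3-form `τ` (encoded via `B` with `⟪B X Y, Z⟫ = τ(X,Y,Z)`) with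
vanishing Bianchi sum `b(τ²) = 0`, each `τ_X` annihilates `τ` under the natural action
(`(τ_X)_* τ = 0`), and consequently the Lie subalgebra of `End(V)` generated by the `τ_X`
is contained in the stabilizer `stab(τ) = {α : α_* τ = 0}`. -/
theorem stmt_4 {V : Type*} [NormedAddCommGroup V] [InnerProductSpace ℝ V]
    [FiniteDimensional ℝ V]
    (B : V →ₗ[ℝ] V →ₗ[ℝ] V)
    (halt1 : ∀ x y z, ⟪B x y, z⟫_ℝ = -⟪B y x, z⟫_ℝ)
    (halt2 : ∀ x y z, ⟪B x y, z⟫_ℝ = -⟪B x z, y⟫_ℝ)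
    (hbianchi : ∀ X Y Z W : V,
      ⟪B Z (B X Y), W⟫_ℝ + ⟪B X (B Y Z), W⟫_ℝ + ⟪B Y (B Z X), W⟫_ℝ = 0) :
    (∀ X Y Z W : V,
        ⟪B (B X Y) Z, W⟫_ℝ + ⟪B Y (B X Z), W⟫_ℝ + ⟪B Y Z, B X W⟫_ℝ = 0)
    ∧ (∀ A : Module.End ℝ V,
        A ∈ LieSubalgebra.lieSpan ℝ (Module.End ℝ V)
          (Set.range fun X : V => (B X : Module.End ℝ V)) →
        ∀ Y Z W : V,
          ⟪B (A Y) Z, W⟫_ℝ + ⟪B Y (A Z), W⟫_ℝ + ⟪B Y Z, A W⟫_ℝ = 0) :=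
  stmt_4_general B halt1 halt2 hbianchi
end

section
/- Let (V,g) be a Euclidean vector space and τ ∈ Λ³V a 3-form. Then b(τ²) = -½ Σ_i τ_{e_i} ∧ τ_{e_i}, where (e_i) is an orthonormal basis of V and each τ_{e_i} is regarded as a 2-form via g. -/
open scoped InnerProductSpace

/-- For a 3-form `τ` on a Euclidean vector space (encoded via `B` with
`⟪B X Y, Z⟫ = τ(X,Y,Z)`) and any orthonormal basis `(e_i)`, one has
`b(τ²) = -½ Σ_i τ_{e_i} ∧ τ_{e_i}`, where `τ_{e_i} = e_i ⌟ τ` is regarded as a 2-form. -/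
theorem stmt_5 {V : Type*} [NormedAddCommGroup V] [InnerProductSpace ℝ V]
    [FiniteDimensional ℝ V] {n : ℕ}
    (e : OrthonormalBasis (Fin n) ℝ V)
    (B : V →ₗ[ℝ] V →ₗ[ℝ] V)
    (halt1 : ∀ x y z, ⟪B x y, z⟫_ℝ = -⟪B y x, z⟫_ℝ)
    (halt2 : ∀ x y z, ⟪B x y, z⟫_ℝ = -⟪B x z, y⟫_ℝ) :
    ∀ X Y Z W : V,
      ⟪B Z (B X Y), W⟫_ℝ + ⟪B X (B Y Z), W⟫_ℝ + ⟪B Y (B Z X), W⟫_ℝ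
        = -(1/2) * ∑ i : Fin n,
            (⟪B (e i) X, Y⟫_ℝ * ⟪B (e i) Z, W⟫_ℝ
              - ⟪B (e i) X, Z⟫_ℝ * ⟪B (e i) Y, W⟫_ℝ
              + ⟪B (e i) X, W⟫_ℝ * ⟪B (e i) Y, Z⟫_ℝ
              + ⟪B (e i) Y, Z⟫_ℝ * ⟪B (e i) X, W⟫_ℝ
              - ⟪B (e i) Y, W⟫_ℝ * ⟪B (e i) X, Z⟫_ℝ
              + ⟪B (e i) Z, W⟫_ℝ * ⟪B (e i) X, Y⟫_ℝ) := by
  intro X Y Z W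
  have cyc : ∀ x y z : V, ⟪B x y, z⟫_ℝ = ⟪B y z, x⟫_ℝ := by
    intro x y z
    rw [halt1, halt2, neg_neg]
  -- key: ∑ i, ⟪B (e i) x, y⟫ * ⟪B (e i) z, w⟫ = ⟪B x y, B z w⟫
  have key : ∀ x y z w : V,
      ∑ i : Fin n, ⟪B (e i) x, y⟫_ℝ * ⟪B (e i) z, w⟫_ℝ = ⟪B x y, B z w⟫_ℝ := by
    intro x y z w
    have h : ∀ i : Fin n,
        ⟪B (e i) x, y⟫_ℝ * ⟪B (e i) z, w⟫_ℝ
          = ⟪B x y, e i⟫_ℝ * ⟪e i, B z w⟫_ℝ := by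
      intro i
      rw [cyc (e i) x y, cyc (e i) z w, real_inner_comm (B z w) (e i)]
    rw [Finset.sum_congr rfl fun i _ => h i, e.sum_inner_mul_inner]
  have hsum :
      ∑ i : Fin n,
            (⟪B (e i) X, Y⟫_ℝ * ⟪B (e i) Z, W⟫_ℝ
              - ⟪B (e i) X, Z⟫_ℝ * ⟪B (e i) Y, W⟫_ℝ
              + ⟪B (e i) X, W⟫_ℝ * ⟪B (e i) Y, Z⟫_ℝ
              + ⟪B (e i) Y, Z⟫_ℝ * ⟪B (e i) X, W⟫_ℝ
              - ⟪B (e i) Y, W⟫_ℝ * ⟪B (e i) X, Z⟫_ℝ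
              + ⟪B (e i) Z, W⟫_ℝ * ⟪B (e i) X, Y⟫_ℝ)
        = ⟪B X Y, B Z W⟫_ℝ - ⟪B X Z, B Y W⟫_ℝ + ⟪B X W, B Y Z⟫_ℝ
            + ⟪B Y Z, B X W⟫_ℝ - ⟪B Y W, B X Z⟫_ℝ + ⟪B Z W, B X Y⟫_ℝ := by
    simp only [Finset.sum_add_distrib, Finset.sum_sub_distrib, key]
  rw [hsum]
  have h1 : ⟪B Z (B X Y), W⟫_ℝ = -⟪B X Y, B Z W⟫_ℝ := by
    rw [halt2, real_inner_comm]
  have h2 : ⟪B X (B Y Z), W⟫_ℝ = -⟪B Y Z, B X W⟫_ℝ := by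
    rw [halt2, real_inner_comm]
  have h3 : ⟪B Y (B Z X), W⟫_ℝ = -⟪B Z X, B Y W⟫_ℝ := by
    rw [halt2, real_inner_comm]
  have hBZX : ⟪B Z X, B Y W⟫_ℝ = -⟪B X Z, B Y W⟫_ℝ := halt1 Z X (B Y W)
  have s1 : ⟪B Y Z, B X W⟫_ℝ = ⟪B X W, B Y Z⟫_ℝ := real_inner_comm _ _
  have s2 : ⟪B Y W, B X Z⟫_ℝ = ⟪B X Z, B Y W⟫_ℝ := real_inner_comm _ _
  have s3 : ⟪B Z W, B X Y⟫_ℝ = ⟪B X Y, B Z W⟫_ℝ := real_inner_comm _ _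
  rw [h1, h2, h3, hBZX, s1, s2, s3]
  ring
end

section
/- Let (V,g,J) be a Hermitian vector space and τ ∈ Λ³V a 3-form of type (3,0)+(0,3), i.e. τ_X anticommutes with J for every X ∈ V. If additionally [τ_X, τ_{JX}] = 0 for every X ∈ V, then τ = 0. -/
open scoped InnerProductSpace

/-- In a Hermitian vector space `(V,g,J)`, a 3-form `τ` of type `(3,0)+(0,3)`
(i.e. each `τ_X` anticommutes with `J`) such that `[τ_X, τ_{JX}] = 0` for every `X`
vanishes. Here `τ` is encoded via `B` with `⟪B X Y, Z⟫ = τ(X,Y,Z)`, `τ_X = B X`. -/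
theorem stmt_6 {V : Type*} [NormedAddCommGroup V] [InnerProductSpace ℝ V]
    [FiniteDimensional ℝ V]
    (J : V →ₗ[ℝ] V) (hJsq : ∀ x, J (J x) = -x)
    (hJo : ∀ x y, ⟪J x, J y⟫_ℝ = ⟪x, y⟫_ℝ)
    (B : V →ₗ[ℝ] V →ₗ[ℝ] V)
    (halt1 : ∀ x y z, ⟪B x y, z⟫_ℝ = -⟪B y x, z⟫_ℝ)
    (halt2 : ∀ x y z, ⟪B x y, z⟫_ℝ = -⟪B x z, y⟫_ℝ)
    (hanti : ∀ x y, B x (J y) = - J (B x y))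
    (hcomm : ∀ x y, B x (B (J x) y) = B (J x) (B x y)) :
    B = 0 := by
  -- ⟪J a, b⟫ = -⟪a, J b⟫
  have hJskew : ∀ a b, ⟪J a, b⟫_ℝ = -⟪a, J b⟫_ℝ := by
    intro a b
    have := hJo a (J b)
    rw [hJsq] at this
    simp only [inner_neg_right] at this
    linarith
  -- B (J x) y = - J (B x y)
  have hBJ : ∀ x y, B (J x) y = - J (B x y) := by
    intro x y
    apply ext_inner_right ℝ
    intro z
    calc ⟪B (J x) y, z⟫_ℝ
        = -⟪B y (J x), z⟫_ℝ := halt1 _ _ _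
      _ = ⟪B y z, J x⟫_ℝ := by rw [halt2]; ring
      _ = -⟪J (B y z), x⟫_ℝ := by have := hJskew (B y z) x; linarith
      _ = ⟪B y (J z), x⟫_ℝ := by rw [hanti, inner_neg_left]
      _ = -⟪B y x, J z⟫_ℝ := halt2 _ _ _
      _ = ⟪B x y, J z⟫_ℝ := by rw [halt1]; ring
      _ = -⟪J (B x y), z⟫_ℝ := by have := hJskew (B x y) z; linarith
      _ = ⟪-J (B x y), z⟫_ℝ := (inner_neg_left _ _).symm
  -- B x (B x y) = 0
  have hsq : ∀ x y, B x (B x y) = 0 := by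
    intro x y
    have h := hcomm x y
    rw [hBJ, hBJ] at h
    have hL : B x (-J (B x y)) = J (B x (B x y)) := by
      rw [map_neg, hanti]; simp
    rw [hL] at h
    have hJ0 : J (B x (B x y)) = 0 := by
      have h2 : (2 : ℝ) • J (B x (B x y)) = 0 := by
        rw [two_smul]; nth_rewrite 1 [h]; simp
      simpa using h2
    have h3 := hJsq (B x (B x y))
    rw [hJ0, map_zero] at h3
    exact (neg_eq_zero.mp h3.symm)
  -- conclude
  ext x y
  have : ⟪B x y, B x y⟫_ℝ = 0 := by
    rw [halt2, real_inner_comm, hsq]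
    simp
  simpa using inner_self_eq_zero.mp this
end

section
/- Let h be a compact Lie algebra, V a nontrivial irreducible real representation of h, and r ≥ 0 such that dim(V ⊕ ℝʳ) = 2n. If h preserves an orthogonal complex structure on V ⊕ ℝʳ (with h acting trivially on ℝʳ and via the given representation on V, preserving an invariant inner product), then h preserves an orthogonal complex structure on V. -/
/-!
The vectors annihilated by the whole action are exactly `Vᗮ`: as the action on `Vᗮ` is trivial,
the `V`-component of such a vector is annihilated too, and the annihilated vectors of `V` form an
invariant subspace, which vanishes by irreducibility and nontriviality. Since `J` commutes with the action it preserves this common kernel `Vᗮ`, and an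
orthogonal complex structure is skew-adjoint, so it also preserves `V = Vᗮᗮ`. Hence `J` itself
restricts to an invariant orthogonal complex structure on `V`.
-/

open scoped InnerProductSpace

attribute [local instance 100] LieRing.ofAssociativeRing

section CommonKernel

variable {ι R M : Type*} [Ring R] [AddCommGroup M] [Module R M] {T : ι → Module.End R M}
  {V : Submodule R M}

theorem eq_zero_of_forall_apply_eq_zero_of_irreducible
    (hirr : ∀ U : Submodule R M, U ≤ V → (∀ i, ∀ v ∈ U, T i v ∈ U) → U = ⊥ ∨ U = V)
    (hnontriv : ∃ i, ∃ v ∈ V, T i v ≠ 0) {v : M} (hv : v ∈ V) (hker : ∀ i, T i v = 0) :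
    v = 0 := by
  set U : Submodule R M := V ⊓ ⨅ i, LinearMap.ker (T i)
  have hU_inv : ∀ i, ∀ u ∈ U, T i u ∈ U := by
    intro i u hu
    rw [(Submodule.mem_iInf _).mp hu.2 i]
    exact U.zero_mem
  rcases hirr U inf_le_left hU_inv with hU | hU
  · simpa [hU] using (show v ∈ U from ⟨hv, Submodule.mem_iInf _ |>.mpr hker⟩)
  · obtain ⟨i, u, hu, hne⟩ := hnontriv
    exact absurd ((Submodule.mem_iInf _).mp (hU ▸ hu : u ∈ U).2 i) hne

end CommonKernel

section Orthogonal

variable {𝕜 E : Type*} [RCLike 𝕜] [NormedAddCommGroup E] [InnerProductSpace 𝕜 E]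

theorem inner_map_left_eq_neg_inner_map_right {J : E →ₗ[𝕜] E} (hJsq : ∀ v, J (J v) = -v)
    (hJo : ∀ v w, ⟪J v, J w⟫_𝕜 = ⟪v, w⟫_𝕜) (v w : E) : ⟪J v, w⟫_𝕜 = -⟪v, J w⟫_𝕜 := by
  rw [← hJo, hJsq, inner_neg_left]

theorem map_mem_orthogonal_of_skew {J : E →ₗ[𝕜] E} (hJ : ∀ v w, ⟪J v, w⟫_𝕜 = -⟪v, J w⟫_𝕜)
    {K : Submodule 𝕜 E} (hK : ∀ v ∈ K, J v ∈ K) : ∀ v ∈ Kᗮ, J v ∈ Kᗮ := by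
  intro v hv w hw
  exact neg_eq_zero.mp ((hJ w v).symm.trans (hv _ (hK w hw)))

theorem map_mem_of_map_mem_orthogonal_of_skew {J : E →ₗ[𝕜] E}
    (hJ : ∀ v w, ⟪J v, w⟫_𝕜 = -⟪v, J w⟫_𝕜) {K : Submodule 𝕜 E} [K.HasOrthogonalProjection]
    (hK : ∀ v ∈ Kᗮ, J v ∈ Kᗮ) : ∀ v ∈ K, J v ∈ K := by
  simpa only [K.orthogonal_orthogonal] using map_mem_orthogonal_of_skew hJ hK

theorem mem_orthogonal_of_forall_apply_eq_zero {ι : Type*} {T : ι → Module.End 𝕜 E}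
    {V : Submodule 𝕜 E} [V.HasOrthogonalProjection] (htriv : ∀ i, ∀ w ∈ Vᗮ, T i w = 0)
    (hfaithful : ∀ v ∈ V, (∀ i, T i v = 0) → v = 0) {k : E} (hk : ∀ i, T i k = 0) :
    k ∈ Vᗮ := by
  obtain ⟨v, hv, w, hw, rfl⟩ := V.exists_add_mem_mem_orthogonal k
  have hv0 : v = 0 := hfaithful v hv fun i => by
    simpa [htriv i w hw] using hk i
  simpa [hv0] using hw

end Orthogonal

theorem stmt_8_general {L : Type*} [LieRing L] [LieAlgebra ℝ L]
    {W : Type*} [NormedAddCommGroup W] [InnerProductSpace ℝ W] [FiniteDimensional ℝ W]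
    (π : L →ₗ⁅ℝ⁆ Module.End ℝ W)
    (Vs : Submodule ℝ W)
    (htriv : ∀ (x : L), ∀ w ∈ Vsᗮ, π x w = 0)
    (hirr : ∀ U : Submodule ℝ W, U ≤ Vs → (∀ (x : L), ∀ v ∈ U, π x v ∈ U) →
      U = ⊥ ∨ U = Vs)
    (hnontriv : ∃ (x : L), ∃ v ∈ Vs, π x v ≠ 0)
    (J : W →ₗ[ℝ] W) (hJsq : ∀ w, J (J w) = -w)
    (hJo : ∀ v w, ⟪J v, J w⟫_ℝ = ⟪v, w⟫_ℝ)
    (hJcomm : ∀ (x : L) (w : W), π x (J w) = J (π x w)) :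
    ∃ J₀ : W →ₗ[ℝ] W,
      (∀ v ∈ Vs, J₀ v ∈ Vs) ∧
      (∀ v ∈ Vs, J₀ (J₀ v) = -v) ∧
      (∀ v ∈ Vs, ∀ w ∈ Vs, ⟪J₀ v, J₀ w⟫_ℝ = ⟪v, w⟫_ℝ) ∧
      (∀ (x : L), ∀ v ∈ Vs, π x (J₀ v) = J₀ (π x v)) := by
  have hfaithful : ∀ v ∈ Vs, (∀ x, π x v = 0) → v = 0 := fun _ hv =>
    eq_zero_of_forall_apply_eq_zero_of_irreducible hirr hnontriv hv
  have hJ_perp : ∀ w ∈ Vsᗮ, J w ∈ Vsᗮ := fun w hw =>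
    mem_orthogonal_of_forall_apply_eq_zero htriv hfaithful fun x => by
      rw [hJcomm, htriv x w hw, map_zero]
  have hJ_Vs : ∀ v ∈ Vs, J v ∈ Vs := map_mem_of_map_mem_orthogonal_of_skew
    (inner_map_left_eq_neg_inner_map_right hJsq hJo) hJ_perp
  exact ⟨J, hJ_Vs, fun v _ => hJsq v, fun v _ w _ => hJo v w, fun x v _ => hJcomm x v⟩

/-- Let `h` (here `L`) be a (compact) Lie algebra acting by skew-symmetric
endomorphisms on a Euclidean space `W = V ⊕ ℝʳ` of dimension `2n`, where the invariant
subspace `V` carries a nontrivial irreducible action and the action on the orthogonal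
complement `ℝʳ = Vᗮ` is trivial. If the action preserves an orthogonal complex structure
`J` on `W`, then it preserves an orthogonal complex structure on `V`. -/
theorem stmt_8 {L : Type*} [LieRing L] [LieAlgebra ℝ L]
    {W : Type*} [NormedAddCommGroup W] [InnerProductSpace ℝ W] [FiniteDimensional ℝ W]
    (π : L →ₗ⁅ℝ⁆ Module.End ℝ W)
    (hskew : ∀ (x : L) (v w : W), ⟪π x v, w⟫_ℝ = -⟪v, π x w⟫_ℝ)
    (Vs : Submodule ℝ W)
    (hinv : ∀ (x : L), ∀ v ∈ Vs, π x v ∈ Vs)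
    (htriv : ∀ (x : L), ∀ w ∈ Vsᗮ, π x w = 0)
    (hirr : ∀ U : Submodule ℝ W, U ≤ Vs → (∀ (x : L), ∀ v ∈ U, π x v ∈ U) →
      U = ⊥ ∨ U = Vs)
    (hnontriv : ∃ (x : L), ∃ v ∈ Vs, π x v ≠ 0)
    (n r : ℕ) (hr : Module.finrank ℝ Vsᗮ = r)
    (hn : Module.finrank ℝ W = 2 * n) (hn1 : 1 ≤ n)
    (J : W →ₗ[ℝ] W) (hJsq : ∀ w, J (J w) = -w)
    (hJo : ∀ v w, ⟪J v, J w⟫_ℝ = ⟪v, w⟫_ℝ)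
    (hJcomm : ∀ (x : L) (w : W), π x (J w) = J (π x w)) :
    ∃ J₀ : W →ₗ[ℝ] W,
      (∀ v ∈ Vs, J₀ v ∈ Vs) ∧
      (∀ v ∈ Vs, J₀ (J₀ v) = -v) ∧
      (∀ v ∈ Vs, ∀ w ∈ Vs, ⟪J₀ v, J₀ w⟫_ℝ = ⟪v, w⟫_ℝ) ∧
      (∀ (x : L), ∀ v ∈ Vs, π x (J₀ v) = J₀ (π x v)) :=
  stmt_8_general π Vs htriv hirr hnontriv J hJsq hJo hJcomm
end

section
/- On the Lie algebra so(5) with the inner product ⟨X,Y⟩ = -½ tr(XY), there exists an orthogonal complex structure J' on the orthogonal complement t^⊥ of a Cartan subalgebra t such that the contraction J' ⌟ σ of J' with the canonical 3-form σ(X,Y,Z) = ⟨[X,Y],Z⟩ vanishes. -/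
open scoped InnerProductSpace

noncomputable section

/-- The elementary alternating 3-form `e^{ijk}` on `ℝ¹⁰` evaluated on `(x,y,z)`. -/
def tripleSO5 (i j k : Fin 10) (x y z : EuclideanSpace ℝ (Fin 10)) : ℝ :=
  x i * y j * z k - x i * y k * z j + x j * y k * z i - x j * y i * z k
    + x k * y i * z j - x k * y j * z i

/-- The canonical 3-form of `so(5)` in the orthonormal basis `(t₁, t₂, x₁, …, x₈)`
(coordinates `0, 1` span the Cartan subalgebra `t`, coordinates `2, …, 9` its orthogonal
complement `t^⊥`):
`σ = e₁∧(x^{12}+x^{57}+x^{68}) + e₂∧(x^{34}+x^{56}+x^{78}) + x^{135}+x^{146}+x^{237}+x^{248}`. -/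
def sigmaSO5 (x y z : EuclideanSpace ℝ (Fin 10)) : ℝ :=
  tripleSO5 0 2 3 x y z + tripleSO5 0 6 8 x y z + tripleSO5 0 7 9 x y z
    + tripleSO5 1 4 5 x y z + tripleSO5 1 6 7 x y z + tripleSO5 1 8 9 x y z
    + tripleSO5 2 4 6 x y z + tripleSO5 2 5 7 x y z + tripleSO5 3 4 8 x y z
    + tripleSO5 3 5 9 x y z

/-!
A 2-form `x ∧ y` acts as the skew endomorphism `v ↦ ⟪x, v⟫ y - ⟪y, v⟫ x`, and
`J' = x^{17}+x^{26}+x^{38}+x^{45}` is the sum of four such maps on disjoint pairs of basis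
vectors of `t^⊥`, so `J'² = -1` on `t^⊥`; skewness then makes `J'` orthogonal there.
The contraction `J' ⌟ σ` is linear in `J'` and `x^{ab} ⌟ σ = σ(x_a, x_b, ·)`, which vanishes
for the four pairs `{1,7}, {2,6}, {3,8}, {4,5}` because none of them lies in a monomial of `σ`.
-/

section Wedge

variable {E : Type*} [NormedAddCommGroup E] [InnerProductSpace ℝ E]

def wedgeEndo (x y : E) : E →ₗ[ℝ] E :=
  (innerₗ E x).smulRight y - (innerₗ E y).smulRight x

lemma wedgeEndo_apply (x y v : E) : wedgeEndo x y v = ⟪x, v⟫_ℝ • y - ⟪y, v⟫_ℝ • x := rfl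

lemma inner_wedgeEndo_left (x y v w : E) :
    ⟪wedgeEndo x y v, w⟫_ℝ = ⟪x, v⟫_ℝ * ⟪y, w⟫_ℝ - ⟪y, v⟫_ℝ * ⟪x, w⟫_ℝ := by
  simp [wedgeEndo_apply, inner_sub_left, inner_smul_left]

lemma inner_wedgeEndo_left_eq_neg (x y v w : E) :
    ⟪wedgeEndo x y v, w⟫_ℝ = -⟪v, wedgeEndo x y w⟫_ℝ := by
  rw [real_inner_comm (wedgeEndo x y w), inner_wedgeEndo_left, inner_wedgeEndo_left]
  ring

lemma inner_map_map_of_skew {T : E →ₗ[ℝ] E} (hT : ∀ v w, ⟪T v, w⟫_ℝ = -⟪v, T w⟫_ℝ)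
    (v : E) {w : E} (hw : T (T w) = -w) : ⟪T v, T w⟫_ℝ = ⟪v, w⟫_ℝ := by
  rw [hT, hw, inner_neg_right, neg_neg]

end Wedge

lemma wedgeEndo_single_apply {ι : Type*} [Fintype ι] [DecidableEq ι] (a b : ι)
    (v : EuclideanSpace ℝ ι) (k : ι) :
    wedgeEndo (EuclideanSpace.single a 1) (EuclideanSpace.single b 1) v k =
      (if k = b then v a else 0) - (if k = a then v b else 0) := by
  simp [wedgeEndo_apply, EuclideanSpace.inner_single_left, PiLp.single_apply]

section Contraction

variable {ι : Type*} [Fintype ι] [LinearOrder ι]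

def contract (J : EuclideanSpace ℝ ι →ₗ[ℝ] EuclideanSpace ℝ ι)
    (σ : EuclideanSpace ℝ ι → EuclideanSpace ℝ ι → EuclideanSpace ℝ ι → ℝ)
    (W : EuclideanSpace ℝ ι) : ℝ :=
  ∑ i : ι, ∑ j : ι,
    if i < j then
      ⟪J (EuclideanSpace.single i (1:ℝ)), EuclideanSpace.single j (1:ℝ)⟫_ℝ *
        σ (EuclideanSpace.single i (1:ℝ)) (EuclideanSpace.single j (1:ℝ)) W
    else 0

variable (σ : EuclideanSpace ℝ ι → EuclideanSpace ℝ ι → EuclideanSpace ℝ ι → ℝ)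
  (W : EuclideanSpace ℝ ι)

lemma contract_add (J₁ J₂ : EuclideanSpace ℝ ι →ₗ[ℝ] EuclideanSpace ℝ ι) :
    contract (J₁ + J₂) σ W = contract J₁ σ W + contract J₂ σ W := by
  simp only [contract, ← Finset.sum_add_distrib]
  refine Finset.sum_congr rfl fun i _ => Finset.sum_congr rfl fun j _ => ?_
  split_ifs <;> simp [inner_add_left, add_mul]

lemma contract_wedgeEndo_single {a b : ι} (hab : a < b) :
    contract (wedgeEndo (EuclideanSpace.single a 1) (EuclideanSpace.single b 1)) σ W =
      σ (EuclideanSpace.single a 1) (EuclideanSpace.single b 1) W := by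
  classical
  simp only [contract, inner_wedgeEndo_left, EuclideanSpace.inner_single_left, PiLp.single_apply]
  rw [Finset.sum_eq_single a, Finset.sum_eq_single b]
  · simp [hab, hab.ne, hab.ne']
  · intro j _ hj
    split_ifs <;> simp_all
  · simp
  · intro i _ hi
    refine Finset.sum_eq_zero fun j _ => ?_
    split_ifs <;> subst_vars <;> simp_all [lt_asymm]
  · simp

end Contraction

open EuclideanSpace in
/-- `J' = x^{17}+x^{26}+x^{38}+x^{45}`, where `x_k` is the basis vector of coordinate `k + 1`. -/
def complexStructureSO5 : EuclideanSpace ℝ (Fin 10) →ₗ[ℝ] EuclideanSpace ℝ (Fin 10) :=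
  wedgeEndo (single 2 1) (single 8 1) + wedgeEndo (single 3 1) (single 7 1)
    + wedgeEndo (single 4 1) (single 9 1) + wedgeEndo (single 5 1) (single 6 1)

lemma complexStructureSO5_apply (v : EuclideanSpace ℝ (Fin 10)) (k : Fin 10) :
    complexStructureSO5 v k =
      (if k = 8 then v 2 else 0) - (if k = 2 then v 8 else 0)
      + ((if k = 7 then v 3 else 0) - (if k = 3 then v 7 else 0))
      + ((if k = 9 then v 4 else 0) - (if k = 4 then v 9 else 0))
      + ((if k = 6 then v 5 else 0) - (if k = 5 then v 6 else 0)) := by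
  simp only [complexStructureSO5, LinearMap.add_apply, PiLp.add_apply, wedgeEndo_single_apply]

lemma complexStructureSO5_apply_zero (v : EuclideanSpace ℝ (Fin 10)) :
    complexStructureSO5 v 0 = 0 := by
  simp [complexStructureSO5_apply]

lemma complexStructureSO5_apply_one (v : EuclideanSpace ℝ (Fin 10)) :
    complexStructureSO5 v 1 = 0 := by
  simp [complexStructureSO5_apply]

lemma complexStructureSO5_single_of_lt_two {i : Fin 10} (hi : i < 2) :
    complexStructureSO5 (EuclideanSpace.single i 1) = 0 := by
  ext k
  have : i ≠ 2 ∧ i ≠ 3 ∧ i ≠ 4 ∧ i ≠ 5 ∧ i ≠ 6 ∧ i ≠ 7 ∧ i ≠ 8 ∧ i ≠ 9 := by omega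
  simp_all [complexStructureSO5_apply, eq_comm]

lemma complexStructureSO5_complexStructureSO5 {v : EuclideanSpace ℝ (Fin 10)} (h0 : v 0 = 0)
    (h1 : v 1 = 0) : complexStructureSO5 (complexStructureSO5 v) = -v := by
  ext k
  fin_cases k <;> simp [complexStructureSO5_apply, h0, h1]

lemma inner_complexStructureSO5_left (v w : EuclideanSpace ℝ (Fin 10)) :
    ⟪complexStructureSO5 v, w⟫_ℝ = -⟪v, complexStructureSO5 w⟫_ℝ := by
  simp only [complexStructureSO5, LinearMap.add_apply, inner_add_left, inner_add_right,
    inner_wedgeEndo_left_eq_neg]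
  ring

lemma contract_complexStructureSO5_sigmaSO5 (W : EuclideanSpace ℝ (Fin 10)) :
    contract complexStructureSO5 sigmaSO5 W = 0 := by
  simp only [complexStructureSO5, contract_add]
  rw [contract_wedgeEndo_single _ _ (by decide), contract_wedgeEndo_single _ _ (by decide),
    contract_wedgeEndo_single _ _ (by decide), contract_wedgeEndo_single _ _ (by decide)]
  simp [sigmaSO5, tripleSO5]

/-- On `so(5)` with the inner product `⟪X,Y⟫ = -½ tr(XY)`, there is an
orthogonal complex structure `J'` on the orthogonal complement `t^⊥` of a Cartan subalgebra
`t` whose contraction with the canonical 3-form `σ` vanishes. -/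
theorem stmt_14 :
    ∃ J' : EuclideanSpace ℝ (Fin 10) →ₗ[ℝ] EuclideanSpace ℝ (Fin 10),
      -- J' vanishes on t = span{e₀, e₁}
      (J' (EuclideanSpace.single 0 (1:ℝ)) = 0) ∧
      (J' (EuclideanSpace.single 1 (1:ℝ)) = 0) ∧
      -- J' takes values in t^⊥
      (∀ v, (J' v) 0 = 0 ∧ (J' v) 1 = 0) ∧
      -- J' is a complex structure on t^⊥
      (∀ v : EuclideanSpace ℝ (Fin 10), v 0 = 0 → v 1 = 0 → J' (J' v) = -v) ∧
      -- J' is orthogonal on t^⊥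
      (∀ v w : EuclideanSpace ℝ (Fin 10), v 0 = 0 → v 1 = 0 → w 0 = 0 → w 1 = 0 →
        ⟪J' v, J' w⟫_ℝ = ⟪v, w⟫_ℝ) ∧
      -- the contraction J' ⌟ σ vanishes
      (∀ W : EuclideanSpace ℝ (Fin 10),
        (∑ i : Fin 10, ∑ j : Fin 10,
          if i < j then
            ⟪J' (EuclideanSpace.single i (1:ℝ)), EuclideanSpace.single j (1:ℝ)⟫_ℝ *
              sigmaSO5 (EuclideanSpace.single i (1:ℝ)) (EuclideanSpace.single j (1:ℝ)) W
          else 0) = 0) := by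
  refine ⟨complexStructureSO5, complexStructureSO5_single_of_lt_two (by decide),
    complexStructureSO5_single_of_lt_two (by decide),
    fun v => ⟨complexStructureSO5_apply_zero v, complexStructureSO5_apply_one v⟩,
    fun v => complexStructureSO5_complexStructureSO5, ?_, contract_complexStructureSO5_sigmaSO5⟩
  intro v w _ _ hw0 hw1
  exact inner_map_map_of_skew inner_complexStructureSO5_left v
    (complexStructureSO5_complexStructureSO5 hw0 hw1)

end
end

section
/- Let h be a compact Lie algebra, V an irreducible nontrivial real representation of h with dim V = 2, and r ≥ 0 with dim(V ⊕ ℝʳ) = 4n, n ≥ 2. Then h (necessarily isomorphic to u(1) ≅ ℝ acting by rotations on V) does not preserve any orthogonal quaternionic structure on V ⊕ ℝʳ: there is no injective Lie algebra homomorphism h → sp(n) ⊕ sp(1) ⊂ so(4n) whose induced representation on ℝ^{4n} decomposes as V ⊕ ℝʳ. -/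
/-!
Write the quaternionic structure as an algebra map `φ : ℍ → End W`. An element `x` acting
nontrivially on `V` decomposes as `π x = s + φ a` with `s` commuting with `φ(ℍ)` and `a` purely
imaginary, and skew-symmetry together with `π x = 0` on `Vᗮ` forces `π x` to map `W` into `V`.
If `a = 0`, then `π x` is `ℍ`-linear, so `V` contains the quaternionic line through `π x v`, of
real dimension `4 > 2`. If `a ≠ 0`, pick `q` not commuting with `a`. On `U = Vᗮ` we have
`s = -φ a`, and evaluating `s` on `U ⊓ φ(q) U` in two ways gives `φ (q a - a q) = 0` there, so
`U ⊓ φ(q) U = 0` and `2 (4n - 2) ≤ 4n`, which fails for `n ≥ 2`.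
-/

open scoped InnerProductSpace Quaternion
open Module

attribute [local instance 100] LieRing.ofAssociativeRing

section DivisionAlgebra

variable {K D V : Type*} [Field K] [DivisionRing D] [Algebra K D] [AddCommGroup V] [Module K V]
  (φ : D →ₐ[K] Module.End K V)

theorem AlgHom.injective_apply_of_ne_zero {q : D} (hq : q ≠ 0) : Function.Injective (φ q) := by
  intro u w h
  simpa [← Module.End.mul_apply, ← map_mul, inv_mul_cancel₀ hq] using congrArg (φ q⁻¹) h

theorem AlgHom.finrank_le_of_forall_apply_mem [FiniteDimensional K V] {U : Submodule K V} {p : V}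
    (hp : p ≠ 0) (hU : ∀ q, φ q p ∈ U) : finrank K D ≤ finrank K U := by
  refine LinearMap.finrank_le_finrank_of_injective
    (f := LinearMap.codRestrict U (LinearMap.applyₗ p ∘ₗ φ.toLinearMap) hU) ?_
  refine (injective_iff_map_eq_zero _).2 fun q hq => ?_
  by_contra hq0
  exact hp (φ.injective_apply_of_ne_zero hq0 ((congrArg Subtype.val hq).trans (map_zero _).symm))

theorem AlgHom.inf_map_eq_bot_of_not_commute {s : Module.End K V} {a q : D} (hqa : ¬Commute q a)
    (hs : Commute s (φ q)) {U : Submodule K V} (hU : ∀ u ∈ U, (s + φ a) u = 0) :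
    U ⊓ U.map (φ q) = ⊥ := by
  refine eq_bot_iff.2 ?_
  rintro w ⟨hwU, u, huU, rfl⟩
  have hsu : s u = -φ a u := eq_neg_of_add_eq_zero_left (hU u huU)
  have hsw : s (φ q u) = -φ a (φ q u) := eq_neg_of_add_eq_zero_left (hU _ hwU)
  have hcomm : φ (q * a - a * q) u = 0 := by
    rw [← Module.End.mul_apply, hs.eq] at hsw
    simp only [map_sub, map_mul, LinearMap.sub_apply, Module.End.mul_apply] at hsw ⊢
    rw [hsu, map_neg] at hsw
    rw [neg_inj.1 hsw, sub_self]
  rw [φ.injective_apply_of_ne_zero (sub_ne_zero.2 hqa) (hcomm.trans (map_zero _).symm), map_zero]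
  exact Submodule.zero_mem _

end DivisionAlgebra

theorem Submodule.two_mul_finrank_le_of_inf_map_eq_bot {K V : Type*} [DivisionRing K]
    [AddCommGroup V] [Module K V] [FiniteDimensional K V] {f : V →ₗ[K] V}
    (hf : Function.Injective f) {U : Submodule K V} (hU : U ⊓ U.map f = ⊥) :
    2 * finrank K U ≤ finrank K V := by
  have hsum := Submodule.finrank_sup_add_finrank_inf_eq U (U.map f)
  rw [hU, finrank_bot, ← (Submodule.equivMapOfInjective f hf U).finrank_eq] at hsum
  have := Submodule.finrank_le (U ⊔ U.map f)
  omega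

theorem Quaternion.exists_not_commute_of_re_eq_zero {a : ℍ[ℝ]} (hre : a.re = 0) (ha : a ≠ 0) :
    ∃ q : ℍ[ℝ], ¬Commute q a := by
  by_contra! h
  simp only [Commute, SemiconjBy] at h
  simp only [Quaternion.ext_iff, Quaternion.re_mul, Quaternion.imI_mul, Quaternion.imJ_mul,
    Quaternion.imK_mul] at h
  obtain ⟨-, -, hk, hj⟩ := h ⟨0, 1, 0, 0⟩
  obtain ⟨-, -, -, hi⟩ := h ⟨0, 0, 1, 0⟩
  exact ha (Quaternion.ext _ _ hre (by rw [Quaternion.imI_zero]; linarith)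
    (by rw [Quaternion.imJ_zero]; linarith) (by rw [Quaternion.imK_zero]; linarith))

def QuaternionAlgebra.Basis.ofAnticommute {R A : Type*} [CommRing R] [Ring A] [Algebra R A]
    {I J K : A} (hI : I * I = -1) (hJ : J * J = -1) (hIJ : I * J = K) (hJI : J * I = -K) :
    QuaternionAlgebra.Basis A (-1 : R) 0 (-1) where
  i := I
  j := J
  k := K
  i_mul_i := by rw [hI, zero_smul, add_zero, neg_one_smul]
  j_mul_j := by rw [hJ, neg_one_smul]
  i_mul_j := hIJ
  j_mul_i := by rw [hJI, zero_smul, zero_sub]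

theorem QuaternionAlgebra.Basis.commute_liftHom {R A : Type*} [CommRing R] [Ring A] [Algebra R A]
    {c₁ c₂ c₃ : R} (q : QuaternionAlgebra.Basis A c₁ c₂ c₃) {s : A} (hi : Commute s q.i)
    (hj : Commute s q.j) (x : ℍ[R,c₁,c₂,c₃]) : Commute s (q.liftHom x) := by
  have hk : Commute s q.k := q.i_mul_j ▸ hi.mul_right hj
  exact (((Algebra.commute_algebraMap_right _ _).add_right (hi.smul_right _)).add_right
    (hj.smul_right _)).add_right (hk.smul_right _)

theorem Submodule.apply_mem_of_skew_of_orthogonal_le_ker {𝕜 E : Type*} [RCLike 𝕜]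
    [NormedAddCommGroup E] [InnerProductSpace 𝕜 E] {U : Submodule 𝕜 E} [U.HasOrthogonalProjection]
    {T : E →ₗ[𝕜] E} (hT : ∀ v w, ⟪T v, w⟫_𝕜 = -⟪v, T w⟫_𝕜) (hU : Uᗮ ≤ LinearMap.ker T) (v : E) :
    T v ∈ U := by
  rw [← U.orthogonal_orthogonal, Submodule.mem_orthogonal]
  intro u hu
  rw [← neg_eq_zero, ← hT, LinearMap.mem_ker.1 (hU hu), inner_zero_left]

theorem stmt_17_general {L : Type*} [LieRing L] [LieAlgebra ℝ L]
    {W : Type*} [NormedAddCommGroup W] [InnerProductSpace ℝ W]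
    (π : L →ₗ⁅ℝ⁆ Module.End ℝ W)
    (hskew : ∀ (x : L) (v w : W), ⟪π x v, w⟫_ℝ = -⟪v, π x w⟫_ℝ)
    (Vs : Submodule ℝ W) (hV2 : Module.finrank ℝ Vs = 2)
    (htriv : ∀ (x : L), ∀ w ∈ Vsᗮ, π x w = 0)
    (hnontriv : ∃ (x : L), ∃ v ∈ Vs, π x v ≠ 0)
    (n : ℕ) (hn : 2 ≤ n)
    (hdim : Module.finrank ℝ W = 4 * n)
    (J1 J2 J3 : W →ₗ[ℝ] W)
    (hJ1sq : ∀ w, J1 (J1 w) = -w) (hJ2sq : ∀ w, J2 (J2 w) = -w)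
    (hq12 : ∀ w, J1 (J2 w) = J3 w) (hq23 : ∀ w, J2 (J3 w) = J1 w)
    -- π lands in sp(n) ⊕ sp(1): π x = σ + a₁ J₁ + a₂ J₂ + a₃ J₃ with σ ∈ sp(n)
    (hsp : ∀ x : L, ∃ (s : W →ₗ[ℝ] W) (a1 a2 a3 : ℝ),
      (∀ w, s (J1 w) = J1 (s w)) ∧ (∀ w, s (J2 w) = J2 (s w)) ∧
      (∀ w, s (J3 w) = J3 (s w)) ∧
      (π x : W →ₗ[ℝ] W) = s + a1 • J1 + a2 • J2 + a3 • J3) :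
    False := by
  have : FiniteDimensional ℝ W := Module.finite_of_finrank_pos (by omega)
  have hJ21 : J2 * J1 = -J3 := LinearMap.ext fun w => by
    rw [Module.End.mul_apply, ← hq23, hJ2sq, LinearMap.neg_apply]
  let B := QuaternionAlgebra.Basis.ofAnticommute (R := ℝ)
    (LinearMap.ext hJ1sq) (LinearMap.ext hJ2sq) (LinearMap.ext hq12) hJ21
  let φ : ℍ[ℝ] →ₐ[ℝ] Module.End ℝ W := B.liftHom
  obtain ⟨x, v, -, hxv⟩ := hnontriv
  obtain ⟨s, a1, a2, a3, hs1, hs2, -, hπ⟩ := hsp x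
  set a : ℍ[ℝ] := ⟨0, a1, a2, a3⟩
  have hφa : φ a = a1 • J1 + a2 • J2 + a3 • J3 := by
    change B.lift a = _
    simp [QuaternionAlgebra.Basis.lift, a, B, QuaternionAlgebra.Basis.ofAnticommute]
  have hπx : π x = s + φ a := by rw [hπ, hφa, add_assoc, add_assoc, add_assoc]
  have hs : ∀ q, Commute s (φ q) := B.commute_liftHom (LinearMap.ext hs1) (LinearMap.ext hs2)
  have hrange : ∀ w, π x w ∈ Vs := Vs.apply_mem_of_skew_of_orthogonal_le_ker (hskew x)
    fun w hw => LinearMap.mem_ker.2 (htriv x w hw)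
  by_cases ha : a = 0
  · have hπs : π x = s := by rw [hπx, ha, map_zero, add_zero]
    have hVs : ∀ q, φ q (π x v) ∈ Vs := fun q => by
      rw [hπs, ← Module.End.mul_apply, ← (hs q).eq, Module.End.mul_apply, ← hπs]
      exact hrange _
    have := φ.finrank_le_of_forall_apply_mem hxv hVs
    rw [Quaternion.finrank_eq_four, hV2] at this
    omega
  · obtain ⟨q, hq⟩ := Quaternion.exists_not_commute_of_re_eq_zero rfl ha
    have hq0 : q ≠ 0 := by rintro rfl; simp at hq
    have hbot := φ.inf_map_eq_bot_of_not_commute hq (hs q) (U := Vsᗮ) fun u hu => hπx ▸ htriv x u hu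
    have := Submodule.two_mul_finrank_le_of_inf_map_eq_bot (φ.injective_apply_of_ne_zero hq0) hbot
    have := Vs.finrank_add_finrank_orthogonal
    omega

/-- Let `h` (here `L`) be a Lie algebra acting by skew-symmetric endomorphisms
on a Euclidean space `W = V ⊕ ℝʳ` of dimension `4n`, `n ≥ 2`, where the invariant subspace
`V` has dimension 2 and carries a nontrivial irreducible action, while the action on the
orthogonal complement `ℝʳ = Vᗮ` is trivial.  Then the action cannot preserve an orthogonal
quaternionic structure on `W`: there is no injective map of `h` into `sp(n) ⊕ sp(1)`
inducing this representation.  Formally, given a quaternionic structure `(J₁,J₂,J₃)` on `W`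
and an injective `π` landing in `sp(n) ⊕ sp(1)`, we derive a contradiction. -/
theorem stmt_17 {L : Type*} [LieRing L] [LieAlgebra ℝ L]
    {W : Type*} [NormedAddCommGroup W] [InnerProductSpace ℝ W] [FiniteDimensional ℝ W]
    (π : L →ₗ⁅ℝ⁆ Module.End ℝ W)
    (hinj : Function.Injective π)
    (hskew : ∀ (x : L) (v w : W), ⟪π x v, w⟫_ℝ = -⟪v, π x w⟫_ℝ)
    (Vs : Submodule ℝ W) (hV2 : Module.finrank ℝ Vs = 2)
    (hinv : ∀ (x : L), ∀ v ∈ Vs, π x v ∈ Vs)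
    (htriv : ∀ (x : L), ∀ w ∈ Vsᗮ, π x w = 0)
    (hirr : ∀ U : Submodule ℝ W, U ≤ Vs → (∀ (x : L), ∀ v ∈ U, π x v ∈ U) →
      U = ⊥ ∨ U = Vs)
    (hnontriv : ∃ (x : L), ∃ v ∈ Vs, π x v ≠ 0)
    (n r : ℕ) (hn : 2 ≤ n) (hr : Module.finrank ℝ Vsᗮ = r)
    (hdim : Module.finrank ℝ W = 4 * n)
    (J1 J2 J3 : W →ₗ[ℝ] W)
    (hJ1sq : ∀ w, J1 (J1 w) = -w) (hJ2sq : ∀ w, J2 (J2 w) = -w)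
    (hJ3sq : ∀ w, J3 (J3 w) = -w)
    (hJ1o : ∀ v w, ⟪J1 v, J1 w⟫_ℝ = ⟪v, w⟫_ℝ)
    (hJ2o : ∀ v w, ⟪J2 v, J2 w⟫_ℝ = ⟪v, w⟫_ℝ)
    (hJ3o : ∀ v w, ⟪J3 v, J3 w⟫_ℝ = ⟪v, w⟫_ℝ)
    (hq12 : ∀ w, J1 (J2 w) = J3 w) (hq23 : ∀ w, J2 (J3 w) = J1 w)
    (hq31 : ∀ w, J3 (J1 w) = J2 w)
    -- π lands in sp(n) ⊕ sp(1): π x = σ + a₁ J₁ + a₂ J₂ + a₃ J₃ with σ ∈ sp(n)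
    (hsp : ∀ x : L, ∃ (s : W →ₗ[ℝ] W) (a1 a2 a3 : ℝ),
      (∀ w, s (J1 w) = J1 (s w)) ∧ (∀ w, s (J2 w) = J2 (s w)) ∧
      (∀ w, s (J3 w) = J3 (s w)) ∧
      (π x : W →ₗ[ℝ] W) = s + a1 • J1 + a2 • J2 + a3 • J3) :
    False :=
  stmt_17_general π hskew Vs hV2 htriv hnontriv n hn hdim J1 J2 J3 hJ1sq hJ2sq hq12 hq23 hsp
end

section
/- Let (V,g) be a Euclidean vector space and τ ∈ Λ³V with b(τ²) = 0, so that [X,Y] := τ_X Y is a Lie bracket making (V, [·,·], g) a metric Lie algebra. If ker τ = {X ∈ V : τ_X = 0} is zero, then this Lie algebra is semisimple, and the stabilizer algebra stab(τ) = {α ∈ so(V) : α_* τ = 0} equals the algebra of skew-symmetric derivations of (V,[·,·]); consequently stab(τ) = g_τ := ad(V), i.e. every element of stab(τ) is of the form τ_X for some X ∈ V. -/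
/-!
Each `τ_X = B X` is skew-adjoint, so in an orthonormal basis `(eᵢ)` the Killing form is
`tr (τ_X ∘ τ_X) = -∑ᵢ ‖τ_X eᵢ‖²`; with `ker τ = 0` it is therefore negative definite, and `B` is
the bracket of a Lie algebra with nondegenerate Killing form. For skew `α`, moving `α` off the
last slot turns `(α_* τ)(y, z, w)` into `⟪B (α y) z + B y (α z) - α (B y z), w⟫`, so `α` stabilizes
`τ` exactly when it is a derivation, and derivations of such a Lie algebra are inner.
-/

open scoped InnerProductSpace

namespace LinearMap

section LieAlgebraOfBracket

variable {K V : Type*} [CommRing K] [AddCommGroup V] [Module K V]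

abbrev lieRingOfBracket (B : V →ₗ[K] V →ₗ[K] V) (hself : ∀ x, B x x = 0)
    (hleib : ∀ x y z, B x (B y z) = B (B x y) z + B y (B x z)) : LieRing V where
  bracket x y := B x y
  add_lie x y z := map_add₂ B x y z
  lie_add x y z := map_add (B x) y z
  lie_self := hself
  leibniz_lie := hleib

abbrev lieAlgebraOfBracket (B : V →ₗ[K] V →ₗ[K] V) (hself : ∀ x, B x x = 0)
    (hleib : ∀ x y z, B x (B y z) = B (B x y) z + B y (B x z)) :
    @LieAlgebra K V _ (lieRingOfBracket B hself hleib) :=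
  letI := lieRingOfBracket B hself hleib
  { lie_smul := fun c x => map_smul (B x) c }

end LieAlgebraOfBracket

theorem exists_eq_of_leibniz_of_killing {K V : Type*} [Field K] [AddCommGroup V] [Module K V]
    [FiniteDimensional K V] (B : V →ₗ[K] V →ₗ[K] V) (hself : ∀ x, B x x = 0)
    (hleib : ∀ x y z, B x (B y z) = B (B x y) z + B y (B x z))
    (hkilling : ∀ x, (∀ y, trace K V (B x ∘ₗ B y) = 0) → x = 0)
    (D : Module.End K V) (hD : ∀ x y, D (B x y) = B (D x) y + B x (D y)) :
    ∃ x, B x = D := by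
  let := lieRingOfBracket B hself hleib
  let := lieAlgebraOfBracket B hself hleib
  have : LieAlgebra.IsKilling K V := ⟨by
    refine eq_bot_iff.mpr fun x hx => hkilling x fun y => ?_
    rw [trace_comp_comm']
    exact (LieIdeal.mem_killingCompl K V ⊤).mp hx y (LieSubmodule.mem_top y)⟩
  let D' : LieDerivation K V V := ⟨D, fun a b => by
    change D (B a b) = B a (D b) - B b (D a)
    rw [hD, show B (D a) b = -B b (D a) from (lie_skew (D a) b).symm, neg_add_eq_sub]⟩
  obtain ⟨x, hx⟩ := LieDerivation.IsKilling.exists_eq_ad D'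
  refine ⟨x, ext fun v => ?_⟩
  have hxv := LieDerivation.congr_fun hx v
  simp only [LieDerivation.ad_apply_apply] at hxv
  exact hxv

section InnerProductSpace

variable {V : Type*} [NormedAddCommGroup V] [InnerProductSpace ℝ V]

theorem eq_zero_of_skew_of_trace_comp_self_eq_zero [FiniteDimensional ℝ V]
    {T : Module.End ℝ V} (hT : ∀ v w, ⟪T v, w⟫_ℝ = -⟪v, T w⟫_ℝ)
    (h : trace ℝ V (T ∘ₗ T) = 0) : T = 0 := by
  set b := stdOrthonormalBasis ℝ V
  have hterm (i) : ⟪b i, (T ∘ₗ T) (b i)⟫_ℝ = -‖T (b i)‖ ^ 2 := by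
    rw [comp_apply, real_inner_comm, hT, real_inner_self_eq_norm_sq]
  have hsum : ∑ i, ‖T (b i)‖ ^ 2 = 0 := by
    rwa [trace_eq_sum_inner _ b, Fintype.sum_congr _ _ hterm, Finset.sum_neg_distrib,
      neg_eq_zero] at h
  have hzero := (Finset.sum_eq_zero_iff_of_nonneg fun i _ => sq_nonneg ‖T (b i)‖).mp hsum
  exact b.toBasis.ext fun i => by simpa using hzero i (Finset.mem_univ i)

theorem skew_stabilizes_iff_leibniz (B : V →ₗ[ℝ] V →ₗ[ℝ] V) {A : Module.End ℝ V}
    (hA : ∀ v w, ⟪A v, w⟫_ℝ = -⟪v, A w⟫_ℝ) :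
    (∀ y z w, ⟪B (A y) z, w⟫_ℝ + ⟪B y (A z), w⟫_ℝ + ⟪B y z, A w⟫_ℝ = 0) ↔
      ∀ x y, A (B x y) = B (A x) y + B x (A y) := by
  have hA' : ∀ y z w, ⟪B y z, A w⟫_ℝ = -⟪A (B y z), w⟫_ℝ := fun y z w => by rw [hA, neg_neg]
  simp only [hA', ← inner_add_left, ← sub_eq_add_neg, ← inner_sub_left]
  refine ⟨fun h x y => ?_, fun h y z w => by rw [← h, sub_self, inner_zero_left]⟩
  exact (sub_eq_zero.mp (ext_inner_right ℝ fun w => by rw [h, inner_zero_left])).symm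

end InnerProductSpace

end LinearMap

open LinearMap in
/-- Let `(V,g)` be a Euclidean vector space and `τ ∈ Λ³V` (encoded via `B`
with `⟪B X Y, Z⟫ = τ(X,Y,Z)`) with `b(τ²) = 0`, so that `[X,Y] := τ_X Y = B X Y` is a Lie
bracket making `(V, [·,·], g)` a metric Lie algebra.  If `ker τ = 0`, then this Lie algebra
is semisimple (Cartan's criterion: its Killing form is nondegenerate), the stabilizer
`stab(τ) = {α ∈ so(V) : α_* τ = 0}` is exactly the set of skew-symmetric derivations of the
bracket, and every element of `stab(τ)` is inner, i.e. of the form `τ_X = B X`. -/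
theorem stmt_19 {V : Type*} [NormedAddCommGroup V] [InnerProductSpace ℝ V]
    [FiniteDimensional ℝ V]
    (B : V →ₗ[ℝ] V →ₗ[ℝ] V)
    (halt1 : ∀ x y z, ⟪B x y, z⟫_ℝ = -⟪B y x, z⟫_ℝ)
    (halt2 : ∀ x y z, ⟪B x y, z⟫_ℝ = -⟪B x z, y⟫_ℝ)
    (hjac : ∀ x y z, B x (B y z) + B y (B z x) + B z (B x y) = 0)
    (hker : ∀ x : V, (∀ y : V, B x y = 0) → x = 0) :
    -- semisimplicity: the Killing form K(x,y) = tr(ad x ∘ ad y) is nondegenerate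
    (∀ x : V, (∀ y : V, LinearMap.trace ℝ V ((B x : Module.End ℝ V) ∘ₗ (B y)) = 0) →
      x = 0)
    -- stab(τ) = skew-symmetric derivations
    ∧ (∀ A : Module.End ℝ V, (∀ v w, ⟪A v, w⟫_ℝ = -⟪v, A w⟫_ℝ) →
        ((∀ y z w, ⟪B (A y) z, w⟫_ℝ + ⟪B y (A z), w⟫_ℝ + ⟪B y z, A w⟫_ℝ = 0)
          ↔ (∀ x y, A (B x y) = B (A x) y + B x (A y))))
    -- stab(τ) = g_τ: every stabilizer element is of the form τ_X
    ∧ (∀ A : Module.End ℝ V, (∀ v w, ⟪A v, w⟫_ℝ = -⟪v, A w⟫_ℝ) →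
        (∀ y z w, ⟪B (A y) z, w⟫_ℝ + ⟪B y (A z), w⟫_ℝ + ⟪B y z, A w⟫_ℝ = 0) →
        ∃ x : V, ∀ v, A v = B x v) := by
  have hanti (x y : V) : B x y = -B y x :=
    ext_inner_right ℝ fun z => by rw [halt1, inner_neg_left]
  have hself (x : V) : B x x = 0 :=
    ext_inner_right ℝ fun z => by rw [inner_zero_left]; linarith [halt1 x x z]
  have hleib (x y z : V) : B x (B y z) = B (B x y) z + B y (B x z) := by
    rw [← sub_eq_zero, ← hjac x y z, hanti z x, hanti z (B x y), map_neg]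
    abel
  have hkilling (x : V) (hx : ∀ y, trace ℝ V (B x ∘ₗ B y) = 0) : x = 0 :=
    hker x fun y => by
      rw [eq_zero_of_skew_of_trace_comp_self_eq_zero
        (fun v w => by rw [halt2, real_inner_comm]) (hx x), LinearMap.zero_apply]
  refine ⟨hkilling, fun A hA => skew_stabilizes_iff_leibniz B hA, fun A hA hstab => ?_⟩
  obtain ⟨x, hx⟩ := exists_eq_of_leibniz_of_killing B hself hleib
    hkilling A ((skew_stabilizes_iff_leibniz B hA).mp hstab)
  exact ⟨x, fun v => by rw [hx]⟩
end
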